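/- In the execution of Algorithm lineon on any request sequence R, the total number of horizontal edges in lineon's solution satisfies |H^on| ≤ Σ_{i=1}^N (ρ^on_i + 2ρ^T_i) ≤ (4Δ+3)·|OPT|. -/

import Mathlib

open Finset

/-! ## The time-line grid of a line network -/

/-- Grid edges of the time-line graph of the line network:
`h v t` is the undirected horizontal edge `{(v,t),(v+1,t)}`,
`a v t` is the arc `((v,t),(v,t+1))` directed forward in time. -/
inductive GEdge : Type
  | h (v t : ℕ) : GEdge
  | a (v t : ℕ) : GEdge
deriving DecidableEq

/-- Distance between two nodes of the line network. -/
def natdist (a b : ℕ) : ℕ := max a b - min a b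

/-- The (replica) endpoints of a grid edge. -/
def eVerts : GEdge → Finset (ℕ × ℕ)
  | .h v t => {(v, t), (v + 1, t)}
  | .a v t => {(v, t), (v, t + 1)}

/-- The replicas that are endpoints of edges of `F`. -/
def verts (F : Finset GEdge) : Finset (ℕ × ℕ) := F.biUnion eVerts

/-- The edge lies inside the grid of the line network `L(n)` (nodes `1,…,n`). -/
def eInGrid (n : ℕ) : GEdge → Prop
  | .h v _ => 1 ≤ v ∧ v + 1 ≤ n
  | .a v _ => 1 ≤ v ∧ v ≤ n

/-- The distance `d((u,s),(v,t)) = (t-s) + |v-u|` if `s ≤ t`, and `∞` otherwise. -/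
def gdist (p q : ℕ × ℕ) : WithTop ℕ :=
  if p.2 ≤ q.2 then ((q.2 - p.2 + natdist p.1 q.1 : ℕ) : WithTop ℕ) else ⊤

/-- One step of a path in a solution: horizontal edges may be traversed in both
directions, arcs only forward in time. -/
inductive GStep (F : Finset GEdge) : ℕ × ℕ → ℕ × ℕ → Prop
  | right {v t : ℕ} : GEdge.h v t ∈ F → GStep F (v, t) (v + 1, t)
  | left {v t : ℕ} : GEdge.h v t ∈ F → GStep F (v + 1, t) (v, t)
  | up {v t : ℕ} : GEdge.a v t ∈ F → GStep F (v, t) (v, t + 1)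

/-- `q` is reachable from `p` in the edge set `F`. -/
def Reaches (F : Finset GEdge) (p q : ℕ × ℕ) : Prop := Relation.ReflTransGen (GStep F) p q

/-- A feasible MCD solution: a set of grid edges spanning all requests from the
origin replica `(r0, 0)`. -/
def Feasible (n r0 : ℕ) (R : List (ℕ × ℕ)) (F : Finset GEdge) : Prop :=
  (∀ e ∈ F, eInGrid n e) ∧ ∀ r ∈ R, Reaches F (r0, 0) r

/-- `|OPT|`, the cost of a minimum-cost feasible solution. -/
noncomputable def optCost (n r0 : ℕ) (R : List (ℕ × ℕ)) : ℕ :=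
  sInf {c : ℕ | ∃ F : Finset GEdge, Feasible n r0 R F ∧ F.card = c}

/-- A valid MCD instance on `L(n)`: the origin and all requested nodes are in
`{1,…,n}` and the request times are nondecreasing. -/
def ValidInstance (n r0 : ℕ) (R : List (ℕ × ℕ)) : Prop :=
  1 ≤ r0 ∧ r0 ≤ n ∧ (∀ r ∈ R, 1 ≤ r.1 ∧ r.1 ≤ n) ∧ List.Chain' (· ≤ ·) (R.map Prod.snd)

/-- The time `t_N` of the last request. -/
def lastT (R : List (ℕ × ℕ)) : ℕ := (R.map Prod.snd).foldr max 0

/-! ## The offline algorithm Triangle of Charikar, Halperin and Motwani -/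

/-- The `i`-th request (junk value `(0,0)` out of range). -/
def req (R : List (ℕ × ℕ)) (i : ℕ) : ℕ × ℕ := R.getD i (0, 0)

/-- The radius `ρ^T_i = d(q_i, r_i)` of the `i`-th request, where `q_i = serve i`
is its serving replica. -/
def triRho (R : List (ℕ × ℕ)) (serve : ℕ → ℕ × ℕ) (i : ℕ) : ℕ :=
  ((req R i).2 - (serve i).2) + natdist (serve i).1 (req R i).1

/-- `Base(i)`: the replicas `(v, t_i)` with `|v - v_i| ≤ ρ^T_i`. -/
def triBase (n : ℕ) (R : List (ℕ × ℕ)) (serve : ℕ → ℕ × ℕ) (i : ℕ) : Finset (ℕ × ℕ) :=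
  ((Finset.Icc 1 n).filter fun v => natdist v (req R i).1 ≤ triRho R serve i).image
    fun v => (v, (req R i).2)

/-- `Base_H(i)`: the horizontal edges joining consecutive replicas of `Base(i)`. -/
def triBaseH (n : ℕ) (R : List (ℕ × ℕ)) (serve : ℕ → ℕ × ℕ) (i : ℕ) : Finset GEdge :=
  ((Finset.Icc 1 n).filter fun v =>
      v + 1 ≤ n ∧ natdist v (req R i).1 ≤ triRho R serve i ∧
        natdist (v + 1) (req R i).1 ≤ triRho R serve i).image
    fun v => GEdge.h v (req R i).2

/-- The arcs of the vertical path from the serving replica `(u_i, s_i)` to `(u_i, t_i)`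
added at step (T3). -/
def triAddA (R : List (ℕ × ℕ)) (serve : ℕ → ℕ × ℕ) (i : ℕ) : Finset GEdge :=
  (Finset.Ico (serve i).2 (req R i).2).image fun τ => GEdge.a (serve i).1 τ

/-- Triangle's solution after handling the first `i` requests. -/
def triSol (R : List (ℕ × ℕ)) (serve : ℕ → ℕ × ℕ) (addH : ℕ → Finset GEdge)
    (i : ℕ) : Finset GEdge :=
  (Finset.range i).biUnion fun j => triAddA R serve j ∪ addH j

/-- The replicas of Triangle's solution after handling the first `i` requests
(initially only the origin replica `(r0,0)`). -/
def triReps (r0 : ℕ) (R : List (ℕ × ℕ)) (serve : ℕ → ℕ × ℕ) (addH : ℕ → Finset GEdge)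
    (i : ℕ) : Finset (ℕ × ℕ) :=
  insert (r0, 0) (verts (triSol R serve addH i))

/-- An execution of Algorithm Triangle on the instance `(n, r0, R)`:
`serve i` is the serving replica `q_i = (u_i, s_i)` of request `r_i` (step (T1)),
chosen in the current solution at minimum distance from `r_i`;
`addH i` is the set of horizontal edges added at step (T4), namely all of
`Base_H(i)` except possibly one edge (the one closing a cycle). -/
structure TriangleExec (n r0 : ℕ) (R : List (ℕ × ℕ)) where
  serve : ℕ → ℕ × ℕ
  addH : ℕ → Finset GEdge
  serve_mem : ∀ i < R.length, serve i ∈ triReps r0 R serve addH i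
  serve_time : ∀ i < R.length, (serve i).2 ≤ (req R i).2
  serve_min : ∀ i < R.length, ∀ q ∈ triReps r0 R serve addH i,
      gdist (serve i) (req R i) ≤ gdist q (req R i)
  addH_spec : ∀ i < R.length, ∃ E : Finset GEdge,
      E.card ≤ 1 ∧ addH i = triBaseH n R serve i \ E
  base_conn : ∀ i < R.length, ∀ p ∈ triBase n R serve i,
      Reaches (triSol R serve addH (i + 1)) (r0, 0) p
  addH_tail : ∀ i, R.length ≤ i → addH i = ∅

/-- `H^T`: the horizontal edges of Triangle's final solution. -/
def triHT (R : List (ℕ × ℕ)) (addH : ℕ → Finset GEdge) : Finset GEdge :=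
  (Finset.range R.length).biUnion addH

/-- `A^T`: the arcs of Triangle's final solution. -/
def triAT (R : List (ℕ × ℕ)) (serve : ℕ → ℕ × ℕ) : Finset GEdge :=
  (Finset.range R.length).biUnion (triAddA R serve)

/-- `Base = ∪ᵢ Base(i)`: all base replicas. -/
def triBaseAll (n : ℕ) (R : List (ℕ × ℕ)) (serve : ℕ → ℕ × ℕ) : Finset (ℕ × ℕ) :=
  (Finset.range R.length).biUnion (triBase n R serve)

/-! ## Algorithm lineon -/

/-- An interval of the hierarchical partition, encoded as `(level, index)`:
`(l, j)` denotes `I^l_j = {Δ(j-1)·2^l + 1, …, Δ·j·2^l}`. -/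
abbrev Ivl := ℕ × ℕ

/-- The nodes of the interval `I = (l, j)`. -/
def ivlNodes (Δ : ℕ) (I : Ivl) : Finset ℕ :=
  Finset.Icc (Δ * (I.2 - 1) * 2 ^ I.1 + 1) (Δ * I.2 * 2 ^ I.1)

/-- `I = (l, j)` is a genuine interval of the partition of `{1,…,n}`,
where `n = Δ · 2^k`: its level is at most `log₂ m = k` and
`1 ≤ j ≤ m / 2^l = 2^(k-l)`. -/
def validIvl (Δ k : ℕ) (I : Ivl) : Prop :=
  I.1 ≤ k ∧ 1 ≤ I.2 ∧ I.2 ≤ 2 ^ (k - I.1)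

/-- The nodes of the neighborhood `N(I) = NL(I) ∪ I ∪ NR(I)` of interval `I`. -/
def nbhdNodes (n Δ : ℕ) (I : Ivl) : Finset ℕ :=
  Finset.Icc (Δ * (I.2 - 2) * 2 ^ I.1 + 1) (min n (Δ * (I.2 + 1) * 2 ^ I.1))

/-- The nodes having a base replica at time `t` (`Base[t]`, as nodes). -/
def baseNodesAt (n : ℕ) (R : List (ℕ × ℕ)) (serve : ℕ → ℕ × ℕ) (t : ℕ) : Finset ℕ :=
  ((triBaseAll n R serve).filter fun p => p.2 = t).image Prod.fst

/-- `I` is active at time `t`: `Base ∩ I[t - 2^{l(I)}, t] ≠ ∅`. -/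
def activeAt (n Δ : ℕ) (R : List (ℕ × ℕ)) (serve : ℕ → ℕ × ℕ) (I : Ivl) (t : ℕ) : Prop :=
  ∃ p ∈ triBaseAll n R serve, p.1 ∈ ivlNodes Δ I ∧ p.2 ≤ t ∧ t ≤ p.2 + 2 ^ I.1

/-- `I` is stay-active at time `t`: `Base ∩ I[t - 2^{l(I)} + 1, t] ≠ ∅`. -/
def stayActiveAt (n Δ : ℕ) (R : List (ℕ × ℕ)) (serve : ℕ → ℕ × ℕ) (I : Ivl) (t : ℕ) : Prop :=
  ∃ p ∈ triBaseAll n R serve, p.1 ∈ ivlNodes Δ I ∧ p.2 ≤ t ∧ t < p.2 + 2 ^ I.1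

/-- `C_t`: the nodes storing a copy at time `t`.  `C_0 = {r0}`, and `C_{t+1}`
consists of the origin together with the nodes selected (by `sel`) for the
commitments made at time `t` (listed, in processing order, in `commitList t`). -/
def lineC (r0 : ℕ) (commitList : ℕ → List Ivl) (sel : ℕ → Ivl → ℕ) : ℕ → Finset ℕ
  | 0 => {r0}
  | t + 1 => insert r0 ((commitList t).map (sel t)).toFinset

/-- The nodes to which the delivery phase for request `r_j` delivers a copy:
the horizontal path from `q^on_j` to `r_j` together with the nodes of `Base(j)`. -/
def servedNodes (n : ℕ) (R : List (ℕ × ℕ)) (serve : ℕ → ℕ × ℕ) (qon : ℕ → ℕ)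
    (j : ℕ) : Finset ℕ :=
  Finset.Icc (min (qon j) (req R j).1) (max (qon j) (req R j).1) ∪
    (triBase n R serve j).image Prod.fst

/-- The nodes whose time-`t_i` replica is in lineon's solution when request `r_i`
arrives: the caches `C_{t_i}` together with everything delivered for earlier
requests of the same time. -/
def availNodes (n r0 : ℕ) (R : List (ℕ × ℕ)) (serve : ℕ → ℕ × ℕ)
    (commitList : ℕ → List Ivl) (sel : ℕ → Ivl → ℕ) (qon : ℕ → ℕ) (i : ℕ) : Finset ℕ :=
  lineC r0 commitList sel (req R i).2 ∪
    (Finset.range i).biUnion fun j =>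
      if (req R j).2 = (req R i).2 then servedNodes n R serve qon j else ∅

/-- An execution of Algorithm lineon with parameter `Δ` (where `n = Δ · 2^k`) on the
instance `(n, r0, R)`.  It simulates Triangle (`tri`); `commitList t` is the list of
intervals committing at time `t`, in the order processed by the storage phase
(levels in increasing order); `sel t I` is the node selected for the commitment
`⟨I,t⟩` in step (S1.2); `qon i` is the node of the serving replica `q^on_i` of
request `r_i` chosen in the delivery phase (step (D1)). -/
structure LineonExec (n Δ k r0 : ℕ) (R : List (ℕ × ℕ)) where
  tri : TriangleExec n r0 R
  hn : n = Δ * 2 ^ k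
  commitList : ℕ → List Ivl
  sel : ℕ → Ivl → ℕ
  qon : ℕ → ℕ
  commit_valid : ∀ t, ∀ I ∈ commitList t, validIvl Δ k I
  commit_nodup : ∀ t, (commitList t).Nodup
  commit_sorted : ∀ t, ((commitList t).map Prod.fst).Pairwise (· ≤ ·)
  commit_stay : ∀ t, ∀ I ∈ commitList t, stayActiveAt n Δ R tri.serve I t
  commit_fresh : ∀ t l₁ I l₂, commitList t = l₁ ++ I :: l₂ →
      ∀ v ∈ nbhdNodes n Δ I, v ≠ r0 ∧ v ∉ l₁.map (sel t)
  commit_tail : ∀ t, lastT R < t → commitList t = []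
  sel_nbhd : ∀ t, ∀ I ∈ commitList t, sel t I ∈ nbhdNodes n Δ I
  sel_src : ∀ t, ∀ I ∈ commitList t,
      sel t I ∈ baseNodesAt n R tri.serve t ∨ sel t I ∈ lineC r0 commitList sel t
  loop_done : ∀ t ≤ lastT R, ∀ I, validIvl Δ k I → stayActiveAt n Δ R tri.serve I t →
      ∃ v ∈ nbhdNodes n Δ I, v ∈ lineC r0 commitList sel (t + 1)
  qon_mem : ∀ i < R.length, qon i ∈ availNodes n r0 R tri.serve commitList sel qon i
  qon_min : ∀ i < R.length, ∀ w ∈ availNodes n r0 R tri.serve commitList sel qon i,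
      natdist (qon i) (req R i).1 ≤ natdist w (req R i).1

/-- The online radius `ρ^on_i = d(q^on_i, r_i)`. -/
def lineRon (R : List (ℕ × ℕ)) (qon : ℕ → ℕ) (i : ℕ) : ℕ := natdist (qon i) (req R i).1

/-- `H^on`: the horizontal edges of lineon's final solution. -/
def lineHon (n : ℕ) (R : List (ℕ × ℕ)) (serve : ℕ → ℕ × ℕ) (qon : ℕ → ℕ) : Finset GEdge :=
  (Finset.range R.length).biUnion fun i =>
    (Finset.Ico (min (qon i) (req R i).1) (max (qon i) (req R i).1)).image
        (fun v => GEdge.h v (req R i).2) ∪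
      triBaseH n R serve i

/-- `A^on`: the arcs of lineon's final solution, i.e. the arcs `((v,t),(v,t+1))`
with `(v,t+1) ∈ C_{t+1}`. -/
def lineAon (r0 : ℕ) (R : List (ℕ × ℕ)) (commitList : ℕ → List Ivl)
    (sel : ℕ → Ivl → ℕ) : Finset GEdge :=
  (Finset.range (lastT R)).biUnion fun t =>
    (lineC r0 commitList sel (t + 1)).image fun v => GEdge.a v t

/-- `COMMIT`, as a finite set of pairs `⟨I, t⟩`. -/
def commitSet (R : List (ℕ × ℕ)) (commitList : ℕ → List Ivl) : Finset (Ivl × ℕ) :=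
  (Finset.range (lastT R + 1)).biUnion fun t =>
    (commitList t).toFinset.image fun I => (I, t)


/-! ### Auxiliary lemmas -/

section Aux

lemma natdist_le_iff {a b c : ℕ} : natdist a b ≤ c ↔ a ≤ b + c ∧ b ≤ a + c := by
  unfold natdist; omega

lemma natdist_triangle (a b c : ℕ) : natdist a c ≤ natdist a b + natdist b c := by
  unfold natdist; omega

lemma natdist_comm (a b : ℕ) : natdist a b = natdist b a := by unfold natdist; omega

lemma gdist_eq {u s v t : ℕ} (h : s ≤ t) :
    gdist (u, s) (v, t) = ((t - s + natdist u v : ℕ) : WithTop ℕ) := by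
  simp [gdist, h]

lemma gdist_ne_top {p q : ℕ × ℕ} (h : gdist p q ≠ ⊤) :
    p.2 ≤ q.2 ∧ gdist p q = ((q.2 - p.2 + natdist p.1 q.1 : ℕ) : WithTop ℕ) := by
  by_cases hle : p.2 ≤ q.2
  · exact ⟨hle, by simp [gdist, hle]⟩
  · exact absurd (by simp [gdist, hle]) h

/-- Along one step, the distance to a fixed target decreases by at most one. -/
lemma gdist_step_le {F : Finset GEdge} {p q : ℕ × ℕ} (r : ℕ × ℕ) (hs : GStep F p q) :
    gdist p r ≤ gdist q r + 1 := by
  by_cases hq : q.2 ≤ r.2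
  · have hp : p.2 ≤ r.2 := by cases hs <;> simp_all <;> omega
    rw [(gdist_ne_top (p := p) (q := r) (by simp [gdist, hp])).2,
        (gdist_ne_top (p := q) (q := r) (by simp [gdist, hq])).2]
    norm_cast
    cases hs <;> simp_all <;> unfold natdist <;> omega
  · have : gdist q r = ⊤ := by simp [gdist, hq]
    rw [this]; simp

lemma step_edge {F : Finset GEdge} {p q : ℕ × ℕ} (hs : GStep F p q) :
    ∃ e ∈ F, p ∈ eVerts e ∧ q ∈ eVerts e := by
  cases hs with
  | right h => exact ⟨_, h, by simp [eVerts], by simp [eVerts]⟩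
  | left h => exact ⟨_, h, by simp [eVerts], by simp [eVerts]⟩
  | up h => exact ⟨_, h, by simp [eVerts], by simp [eVerts]⟩

lemma reaches_mem {F : Finset GEdge} {x y : ℕ × ℕ} (h : Reaches F x y) :
    y = x ∨ y ∈ verts F := by
  induction h with
  | refl => exact Or.inl rfl
  | tail _ hstep _ =>
      right
      obtain ⟨e, he, _, hq⟩ := step_edge hstep
      exact Finset.mem_biUnion.2 ⟨e, he, hq⟩


lemma gdist_self (p : ℕ × ℕ) : gdist p p = 0 := by
  simp [gdist, natdist]

lemma eVerts_pair (e : GEdge) : ∃ x y : ℕ × ℕ, x ≠ y ∧ eVerts e = {x, y} := by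
  cases e with
  | h v t => exact ⟨(v, t), (v + 1, t), by simp, rfl⟩
  | a v t => exact ⟨(v, t), (v, t + 1), by simp, rfl⟩

lemma eVerts_inGrid {n : ℕ} {e : GEdge} (h : eInGrid n e) {p : ℕ × ℕ}
    (hp : p ∈ eVerts e) : 1 ≤ p.1 ∧ p.1 ≤ n := by
  cases e <;> simp [eVerts] at hp <;> rcases hp with rfl | rfl <;>
    simp [eInGrid] at h ⊢ <;> omega

/-- Edge `e` crosses level `m` on the way to `r`. -/
def Crosses (F : Finset GEdge) (r : ℕ × ℕ) (m : ℕ) (e : GEdge) : Prop :=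
  e ∈ F ∧ ∃ p ∈ eVerts e, ∃ q ∈ eVerts e,
    gdist q r = (m : WithTop ℕ) ∧ gdist p r = ((m + 1 : ℕ) : WithTop ℕ)

lemma wt_le {x y : ℕ} : (x : WithTop ℕ) ≤ (y : WithTop ℕ) ↔ x ≤ y := by exact_mod_cast Iff.rfl
lemma wt_lt {x y : ℕ} : (x : WithTop ℕ) < (y : WithTop ℕ) ↔ x < y := by exact_mod_cast Iff.rfl
lemma wt_inj {x y : ℕ} : (x : WithTop ℕ) = (y : WithTop ℕ) ↔ x = y := by exact_mod_cast Iff.rfl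
lemma wt_ne_top (x : ℕ) : (x : WithTop ℕ) ≠ ⊤ := by
  have : (x : WithTop ℕ) < ((x + 1 : ℕ) : WithTop ℕ) := wt_lt.2 (Nat.lt_succ_self x)
  exact ne_top_of_lt this

lemma cross_exists {F : Finset GEdge} {r p : ℕ × ℕ} (hreach : Reaches F p r) :
    ∀ m : ℕ, (m : WithTop ℕ) < gdist p r → ∃ e, Crosses F r m e := by
  induction hreach using Relation.ReflTransGen.head_induction_on with
  | refl => intro m hm; rw [gdist_self] at hm; exact absurd hm (by simp)
  | head hstep htail ih =>
      intro m hm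
      rename_i a c
      by_cases h2 : (m : WithTop ℕ) < gdist c r
      · exact ih m h2
      · push_neg at h2
        have h3 : gdist a r ≤ ((m + 1 : ℕ) : WithTop ℕ) := by
          calc gdist a r ≤ gdist c r + 1 := gdist_step_le r hstep
          _ ≤ (m : WithTop ℕ) + 1 := by exact add_le_add_left h2 1
          _ = ((m + 1 : ℕ) : WithTop ℕ) := by push_cast; ring
        have h4 : gdist a r = ((m + 1 : ℕ) : WithTop ℕ) := by
          refine le_antisymm h3 ?_
          have hne : gdist a r ≠ ⊤ := by
            intro hh; rw [hh, top_le_iff] at h3; exact wt_ne_top _ h3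
          obtain ⟨_, heq⟩ := gdist_ne_top hne
          rw [heq] at hm ⊢
          rw [wt_le]; rw [wt_lt] at hm; omega
        have h5 : gdist c r = (m : WithTop ℕ) := by
          refine le_antisymm h2 ?_
          have h6 : gdist a r ≤ gdist c r + 1 := gdist_step_le r hstep
          rw [h4] at h6
          have hne : gdist c r ≠ ⊤ := by
            intro hh; rw [hh, top_le_iff] at h2; exact wt_ne_top _ h2
          obtain ⟨_, heq⟩ := gdist_ne_top hne
          rw [heq] at h6 ⊢
          rw [show ((r.2 - c.2 + natdist c.1 r.1 : ℕ) : WithTop ℕ) + 1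
              = ((r.2 - c.2 + natdist c.1 r.1 + 1 : ℕ) : WithTop ℕ) by push_cast; ring] at h6
          rw [wt_le] at h6 ⊢; omega
        obtain ⟨e, he, hpa, hpc⟩ := step_edge hstep
        exact ⟨e, he, a, hpa, c, hpc, h5, h4⟩

lemma crosses_min {F : Finset GEdge} {r : ℕ × ℕ} {m : ℕ} {e : GEdge}
    {x y : ℕ × ℕ} (hxy : eVerts e = {x, y}) (h : Crosses F r m e) :
    min (gdist x r) (gdist y r) = (m : WithTop ℕ) := by
  obtain ⟨_, p, hp, q, hq, hqm, hpm⟩ := h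
  have hpq : p ≠ q := by
    intro hh; rw [hh, hqm] at hpm
    have : m + 1 = m := by exact_mod_cast hpm.symm
    omega
  rw [hxy] at hp hq
  simp only [Finset.mem_insert, Finset.mem_singleton] at hp hq
  rcases hp with rfl | rfl <;> rcases hq with rfl | rfl
  · exact absurd rfl hpq
  · rw [hpm, hqm]; exact min_eq_right (by exact_mod_cast Nat.le_succ m)
  · rw [hpm, hqm]; exact min_eq_left (by exact_mod_cast Nat.le_succ m)
  · exact absurd rfl hpq

lemma crosses_level_eq {F : Finset GEdge} {r : ℕ × ℕ} {m m' : ℕ} {e : GEdge}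
    (h : Crosses F r m e) (h' : Crosses F r m' e) : m = m' := by
  obtain ⟨x, y, hxy, hxy'⟩ := eVerts_pair e
  have h1 := crosses_min hxy' h
  have h2 := crosses_min hxy' h'
  rw [h1] at h2
  exact_mod_cast h2

lemma crosses_vert_le {F : Finset GEdge} {r : ℕ × ℕ} {m : ℕ} {e : GEdge}
    (h : Crosses F r m e) {z : ℕ × ℕ} (hz : z ∈ eVerts e) :
    gdist z r ≤ ((m + 1 : ℕ) : WithTop ℕ) := by
  obtain ⟨x, y, hxy, hxy'⟩ := eVerts_pair e
  obtain ⟨_, p, hp, q, hq, hqm, hpm⟩ := h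
  have hpq : p ≠ q := by
    intro hh; rw [hh, hqm] at hpm
    have : m + 1 = m := by exact_mod_cast hpm.symm
    omega
  have hm : (m : WithTop ℕ) ≤ ((m + 1 : ℕ) : WithTop ℕ) := by
    exact_mod_cast Nat.le_succ m
  rw [hxy'] at hp hq hz
  simp only [Finset.mem_insert, Finset.mem_singleton] at hp hq hz
  rcases hz with rfl | rfl <;> rcases hp with rfl | rfl <;> rcases hq with rfl | rfl <;>
    first
      | exact absurd rfl hpq
      | (rw [hpm])
      | (rw [hqm]; exact hm)


instance : Inhabited GEdge := ⟨GEdge.h 0 0⟩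

lemma req_eq_get {R : List (ℕ × ℕ)} {i : ℕ} (h : i < R.length) : req R i = R[i] :=
  List.getD_eq_getElem R (0, 0) h

lemma req_mem {R : List (ℕ × ℕ)} {i : ℕ} (h : i < R.length) : req R i ∈ R := by
  rw [req_eq_get h]; exact List.getElem_mem h

lemma req_time_mono {R : List (ℕ × ℕ)} (hC : List.Chain' (· ≤ ·) (R.map Prod.snd))
    {j i : ℕ} (hj : j ≤ i) (hi : i < R.length) : (req R j).2 ≤ (req R i).2 := by
  rcases eq_or_lt_of_le hj with rfl | hlt
  · exact le_refl _
  · have hp := (List.isChain_iff_pairwise.1 hC)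
    rw [List.pairwise_iff_getElem] at hp
    have hj' : j < R.length := lt_trans hlt hi
    have := hp j i (by simpa using hj') (by simpa using hi) hlt
    simp only [List.getElem_map] at this
    rw [req_eq_get hj', req_eq_get hi]
    exact this

lemma foldr_max_le {l : List ℕ} {x : ℕ} (h : x ∈ l) : x ≤ l.foldr max 0 := by
  induction l with
  | nil => simp at h
  | cons a l ih =>
      simp only [List.foldr]
      rcases List.mem_cons.1 h with rfl | h
      · exact le_max_left _ _
      · exact le_trans (ih h) (le_max_right _ _)

lemma time_le_lastT {R : List (ℕ × ℕ)} {i : ℕ} (h : i < R.length) :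
    (req R i).2 ≤ lastT R :=
  foldr_max_le (List.mem_map.2 ⟨req R i, req_mem h, rfl⟩)

lemma mem_triBase {n : ℕ} {R : List (ℕ × ℕ)} {serve : ℕ → ℕ × ℕ} {j w : ℕ}
    (h1 : 1 ≤ w) (h2 : w ≤ n) (h3 : natdist w (req R j).1 ≤ triRho R serve j) :
    (w, (req R j).2) ∈ triBase n R serve j :=
  Finset.mem_image.2 ⟨w, Finset.mem_filter.2 ⟨Finset.mem_Icc.2 ⟨h1, h2⟩, h3⟩, rfl⟩

section Tri

variable {n r0 : ℕ} {R : List (ℕ × ℕ)} (T : TriangleExec n r0 R)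

lemma gdist_serve {i : ℕ} (hi : i < R.length) :
    gdist (T.serve i) (req R i) = ((triRho R T.serve i : ℕ) : WithTop ℕ) := by
  have h := T.serve_time i hi
  simp [gdist, h, triRho]

lemma rho_min {i : ℕ} (hi : i < R.length) {q : ℕ × ℕ}
    (hq : q ∈ triReps r0 R T.serve T.addH i) :
    ((triRho R T.serve i : ℕ) : WithTop ℕ) ≤ gdist q (req R i) := by
  rw [← gdist_serve T hi]
  exact T.serve_min i hi q hq

lemma triSol_mono {i i' : ℕ} (h : i ≤ i') :
    triSol R T.serve T.addH i ⊆ triSol R T.serve T.addH i' :=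
  Finset.biUnion_subset_biUnion_of_subset_left _ (Finset.range_subset_range.2 h)

lemma base_mem_reps {j i : ℕ} (hj : j < R.length) (hji : j < i) {b : ℕ × ℕ}
    (hb : b ∈ triBase n R T.serve j) : b ∈ triReps r0 R T.serve T.addH i := by
  have hr := T.base_conn j hj b hb
  rcases reaches_mem hr with rfl | hv
  · exact Finset.mem_insert_self _ _
  · refine Finset.mem_insert_of_mem ?_
    exact Finset.biUnion_subset_biUnion_of_subset_left _ (triSol_mono T hji) hv

lemma reps_struct (hV : ValidInstance n r0 R) :
    ∀ i, i ≤ R.length → ∀ p ∈ triReps r0 R T.serve T.addH i,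
      (1 ≤ p.1 ∧ p.1 ≤ n) ∧ (p = (r0, 0) ∨ ∃ j < i, p.2 ≤ (req R j).2 ∧
        (p.1, (req R j).2) ∈ triBase n R T.serve j) := by
  intro i
  induction i using Nat.strong_induction_on with
  | _ i ih =>
    intro hi p hp
    rcases Finset.mem_insert.1 hp with rfl | hp
    · exact ⟨⟨hV.1, hV.2.1⟩, Or.inl rfl⟩
    · obtain ⟨e, he, hpe⟩ := Finset.mem_biUnion.1 hp
      obtain ⟨j, hjmem, he2⟩ := Finset.mem_biUnion.1 he
      have hj : j < i := Finset.mem_range.1 hjmem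
      have hjR : j < R.length := lt_of_lt_of_le hj hi
      rcases Finset.mem_union.1 he2 with hA | hH
      · obtain ⟨τ, hτ, rfl⟩ := Finset.mem_image.1 hA
        have hτ' := Finset.mem_Ico.1 hτ
        have hs := T.serve_mem j hjR
        have hrange := (ih j hj (le_of_lt hjR) _ hs).1
        have hbase : ((T.serve j).1, (req R j).2) ∈ triBase n R T.serve j :=
          mem_triBase hrange.1 hrange.2 (Nat.le_add_left _ _)
        simp only [eVerts, Finset.mem_insert, Finset.mem_singleton] at hpe
        rcases hpe with rfl | rfl
        · exact ⟨hrange, Or.inr ⟨j, hj, le_of_lt hτ'.2, hbase⟩⟩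
        · exact ⟨hrange, Or.inr ⟨j, hj, hτ'.2, hbase⟩⟩
      · obtain ⟨E, _, hEeq⟩ := T.addH_spec j hjR
        rw [hEeq] at hH
        have hH' := Finset.mem_sdiff.1 hH
        obtain ⟨v, hv, rfl⟩ := Finset.mem_image.1 hH'.1
        obtain ⟨hv1, hv2⟩ := Finset.mem_filter.1 hv
        have hv1' := Finset.mem_Icc.1 hv1
        simp only [eVerts, Finset.mem_insert, Finset.mem_singleton] at hpe
        rcases hpe with rfl | rfl
        · exact ⟨⟨hv1'.1, le_trans (Nat.le_succ v) hv2.1⟩,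
            Or.inr ⟨j, hj, le_refl _, mem_triBase hv1'.1 (le_trans (Nat.le_succ v) hv2.1)
              hv2.2.1⟩⟩
        · exact ⟨⟨le_trans hv1'.1 (Nat.le_succ v), hv2.1⟩,
            Or.inr ⟨j, hj, le_refl _, mem_triBase (le_trans hv1'.1 (Nat.le_succ v)) hv2.1
              hv2.2.2⟩⟩

lemma cross_disjoint (hV : ValidInstance n r0 R) {F : Finset GEdge}
    (hF : Feasible n r0 R F) {j i : ℕ} (hji : j < i) (hi : i < R.length)
    {mi mj : ℕ} (hmi : mi < triRho R T.serve i) (hmj : mj < triRho R T.serve j)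
    {e : GEdge} (hci : Crosses F (req R i) mi e) (hcj : Crosses F (req R j) mj e) :
    False := by
  obtain ⟨heF, p', hp', q, hq, hqm, _⟩ := hci
  have hqj : gdist q (req R j) ≤ ((mj + 1 : ℕ) : WithTop ℕ) := crosses_vert_le hcj hq
  have hne : gdist q (req R j) ≠ ⊤ := by
    intro hh; rw [hh, top_le_iff] at hqj; exact wt_ne_top _ hqj
  obtain ⟨hq2, heq⟩ := gdist_ne_top hne
  rw [heq, wt_le] at hqj
  have hrange := eVerts_inGrid (hF.1 e heF) hq
  have hb : (q.1, (req R j).2) ∈ triBase n R T.serve j :=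
    mem_triBase hrange.1 hrange.2 (by omega)
  have hbr := base_mem_reps T (lt_trans hji hi) hji hb
  have hmin := rho_min T hi hbr
  have hnei : gdist q (req R i) ≠ ⊤ := by rw [hqm]; exact wt_ne_top _
  obtain ⟨hqi2, heqi⟩ := gdist_ne_top hnei
  rw [heqi, wt_inj] at hqm
  have htji : (req R j).2 ≤ (req R i).2 := req_time_mono hV.2.2.2 (le_of_lt hji) hi
  have hgb : gdist (q.1, (req R j).2) (req R i) =
      (((req R i).2 - (req R j).2 + natdist q.1 (req R i).1 : ℕ) : WithTop ℕ) := by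
    simp [gdist, htji]
  rw [hgb, wt_le] at hmin
  omega

lemma sum_rho_le_card (hV : ValidInstance n r0 R) {F : Finset GEdge}
    (hF : Feasible n r0 R F) :
    ∑ i ∈ Finset.range R.length, triRho R T.serve i ≤ F.card := by
  classical
  have hcross : ∀ i < R.length, ∀ m < triRho R T.serve i,
      ∃ e, Crosses F (req R i) m e := by
    intro i hi m hm
    apply cross_exists (hF.2 (req R i) (req_mem hi)) m
    calc (m : WithTop ℕ) < ((triRho R T.serve i : ℕ) : WithTop ℕ) := wt_lt.2 hm
    _ ≤ gdist (r0, 0) (req R i) := rho_min T hi (Finset.mem_insert_self _ _)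
  choose! f hf using hcross
  have hmaps : ∀ x ∈ (Finset.range R.length).sigma
      (fun i => Finset.range (triRho R T.serve i)), f x.1 x.2 ∈ F := by
    intro x hx
    have hx' := Finset.mem_sigma.1 hx
    exact (hf x.1 (Finset.mem_range.1 hx'.1) x.2 (Finset.mem_range.1 hx'.2)).1
  have hinj : Set.InjOn (fun x : (_ : ℕ) × ℕ => f x.1 x.2)
      ((Finset.range R.length).sigma
        (fun i => Finset.range (triRho R T.serve i)) : Finset ((_ : ℕ) × ℕ)) := by
    intro x hx y hy hxy
    simp only [Finset.coe_sigma, Set.mem_sigma_iff, Finset.mem_coe,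
      Finset.mem_range] at hx hy
    obtain ⟨i, mi⟩ := x
    obtain ⟨j, mj⟩ := y
    simp only at hxy
    have hci := hf i hx.1 mi hx.2
    have hcj := hf j hy.1 mj hy.2
    rw [hxy] at hci
    rcases lt_trichotomy i j with h | rfl | h
    · exact absurd (cross_disjoint T hV hF h hy.1 hy.2 hx.2 hcj hci) id
    · have := crosses_level_eq hci hcj
      subst this; rfl
    · exact absurd (cross_disjoint T hV hF h hx.1 hx.2 hy.2 hci hcj) id
  have hc := Finset.card_le_card_of_injOn _ hmaps hinj
  simpa using hc

lemma feasible_exists (hV : ValidInstance n r0 R) : ∃ F, Feasible n r0 R F := by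
  classical
  set L := lastT R with hL
  refine ⟨(((Finset.Icc 1 (n - 1)) ×ˢ (Finset.Icc 0 L)).image fun vt => GEdge.h vt.1 vt.2) ∪
    ((Finset.Icc 0 L).image fun t => GEdge.a r0 t), ?_, ?_⟩
  · intro e he
    rcases Finset.mem_union.1 he with h | h
    · obtain ⟨vt, hvt, rfl⟩ := Finset.mem_image.1 h
      have := Finset.mem_product.1 hvt
      have h1 := Finset.mem_Icc.1 this.1
      have hn : 1 ≤ n := le_trans hV.1 hV.2.1
      exact ⟨h1.1, by omega⟩
    · obtain ⟨t, _, rfl⟩ := Finset.mem_image.1 h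
      exact ⟨hV.1, hV.2.1⟩
  · intro r hr
    set F0 := (((Finset.Icc 1 (n - 1)) ×ˢ (Finset.Icc 0 L)).image
        fun vt => GEdge.h vt.1 vt.2) ∪
      ((Finset.Icc 0 L).image fun t => GEdge.a r0 t) with hF0
    have hrt : r.2 ≤ L := foldr_max_le (List.mem_map.2 ⟨r, hr, rfl⟩)
    have hrv := hV.2.2.1 r hr
    have hmemh : ∀ v t, 1 ≤ v → v + 1 ≤ n → t ≤ L → GEdge.h v t ∈ F0 := by
      intro v t h1 h2 h3
      exact Finset.mem_union_left _ (Finset.mem_image.2 ⟨(v, t),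
        Finset.mem_product.2 ⟨Finset.mem_Icc.2 ⟨h1, by omega⟩,
          Finset.mem_Icc.2 ⟨Nat.zero_le _, h3⟩⟩, rfl⟩)
    have hverts : ∀ t ≤ L, Reaches F0 (r0, 0) (r0, t) := by
      intro t
      induction t with
      | zero => intro _; exact Relation.ReflTransGen.refl
      | succ t ih =>
          intro h
          refine Relation.ReflTransGen.tail (ih (by omega)) (GStep.up ?_)
          exact Finset.mem_union_right _ (Finset.mem_image.2 ⟨t,
            Finset.mem_Icc.2 ⟨Nat.zero_le _, by omega⟩, rfl⟩)
    have hright : ∀ (d a t : ℕ), 1 ≤ a → a + d ≤ n → t ≤ L →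
        Reaches F0 (a, t) (a + d, t) := by
      intro d
      induction d with
      | zero => intro a t _ _ _; exact Relation.ReflTransGen.refl
      | succ d ih =>
          intro a t h1 h2 h3
          have : a + (d + 1) = (a + d) + 1 := by omega
          rw [this]
          exact Relation.ReflTransGen.tail (ih a t h1 (by omega) h3)
            (GStep.right (hmemh _ _ (by omega) (by omega) h3))
    have hleft : ∀ (d a t : ℕ), d < a → a ≤ n → t ≤ L →
        Reaches F0 (a, t) (a - d, t) := by
      intro d
      induction d with
      | zero => intro a t _ _ _; simp; exact Relation.ReflTransGen.refl
      | succ d ih =>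
          intro a t h1 h2 h3
          have step : GStep F0 (a - d, t) (a - d - 1, t) := by
            have he : GEdge.h (a - d - 1) t ∈ F0 := hmemh _ _ (by omega) (by omega) h3
            have : a - d = (a - d - 1) + 1 := by omega
            rw [this]
            exact GStep.left he
          have : a - (d + 1) = a - d - 1 := by omega
          rw [this]
          exact Relation.ReflTransGen.tail (ih a t (by omega) h2 h3) step
    have hbase := hverts r.2 hrt
    rcases le_total r0 r.1 with h | h
    · have := hright (r.1 - r0) r0 r.2 hV.1 (by omega) hrt
      have heq : r0 + (r.1 - r0) = r.1 := by omega
      rw [heq] at this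
      exact Relation.ReflTransGen.trans hbase (by rw [(by rfl : r = (r.1, r.2))] at hr ⊢; exact this)
    · have := hleft (r0 - r.1) r0 r.2 (by omega) hV.2.1 hrt
      have heq : r0 - (r0 - r.1) = r.1 := by omega
      rw [heq] at this
      exact Relation.ReflTransGen.trans hbase this

lemma sum_rho_le_opt (hV : ValidInstance n r0 R) :
    ∑ i ∈ Finset.range R.length, triRho R T.serve i ≤ optCost n r0 R := by
  obtain ⟨F, hF⟩ := feasible_exists (r0 := r0) (R := R) (n := n) hV
  have hne : {c : ℕ | ∃ F : Finset GEdge, Feasible n r0 R F ∧ F.card = c}.Nonempty :=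
    ⟨F.card, F, hF, rfl⟩
  obtain ⟨F', hF', hc⟩ := Nat.sInf_mem hne
  rw [optCost, ← hc]
  exact sum_rho_le_card T hV hF'

end Tri

lemma r0_mem_lineC (r0 : ℕ) (cl : ℕ → List Ivl) (sel : ℕ → Ivl → ℕ) (t : ℕ) :
    r0 ∈ lineC r0 cl sel t := by
  cases t <;> simp [lineC]

lemma two_pow_clog_le {g : ℕ} (h : 1 ≤ g) : 2 ^ Nat.clog 2 g ≤ 2 * g := by
  rcases Nat.lt_or_ge g 2 with hg | hg
  · have hg1 : g = 1 := by omega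
    subst hg1
    rw [Nat.clog_one_right]; omega
  · have h3 := Nat.pow_pred_clog_lt_self one_lt_two hg
    simp only [Nat.pred_eq_sub_one] at h3
    have h4 : 1 ≤ Nat.clog 2 g := Nat.clog_pos one_lt_two hg
    have h5 : 2 ^ Nat.clog 2 g = 2 * 2 ^ (Nat.clog 2 g - 1) := by
      rw [← pow_succ']; congr 1; omega
    omega

section Lineon

variable {n Δ k r0 : ℕ} {R : List (ℕ × ℕ)} (E : LineonExec n Δ k r0 R)

lemma ron_le (hV : ValidInstance n r0 R) (hΔ : 1 ≤ Δ) {i : ℕ} (hi : i < R.length) :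
    lineRon R E.qon i ≤ (4 * Δ + 1) * triRho R E.tri.serve i := by
  have hronle : ∀ w ∈ availNodes n r0 R E.tri.serve E.commitList E.sel E.qon i,
      lineRon R E.qon i ≤ natdist w (req R i).1 := E.qon_min i hi
  have hcoef : triRho R E.tri.serve i ≤ (4 * Δ + 1) * triRho R E.tri.serve i :=
    Nat.le_mul_of_pos_left _ (by omega)
  have hs := E.tri.serve_mem i hi
  obtain ⟨hrange, hstruct⟩ := reps_struct E.tri hV i (le_of_lt hi) _ hs
  rcases hstruct with hserve0 | ⟨j, hji, hle, hbase⟩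
  · -- served from the origin replica
    have h1 : natdist r0 (req R i).1 ≤ triRho R E.tri.serve i := by
      unfold triRho; rw [hserve0]; exact Nat.le_add_left _ _
    refine le_trans (hronle r0 (Finset.mem_union_left _ ?_)) (le_trans h1 hcoef)
    exact r0_mem_lineC r0 E.commitList E.sel _
  · set w := (E.tri.serve i).1 with hw
    have hjR : j < R.length := lt_trans hji hi
    have htji : (req R j).2 ≤ (req R i).2 := req_time_mono hV.2.2.2 (le_of_lt hji) hi
    have hsti := E.tri.serve_time i hi
    have hkey : ((req R i).2 - (req R j).2) + natdist w (req R i).1 ≤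
        triRho R E.tri.serve i := by
      have hnd : natdist w (req R i).1 = natdist (E.tri.serve i).1 (req R i).1 := by
        rw [hw]
      unfold triRho; rw [← hnd]; omega
    by_cases hsame : (req R j).2 = (req R i).2
    · have hwserved : w ∈ servedNodes n R E.tri.serve E.qon j :=
        Finset.mem_union_right _ (Finset.mem_image.2 ⟨(w, (req R j).2), hbase, rfl⟩)
      have havail : w ∈ availNodes n r0 R E.tri.serve E.commitList E.sel E.qon i := by
        refine Finset.mem_union_right _ (Finset.mem_biUnion.2
          ⟨j, Finset.mem_range.2 hji, ?_⟩)
        rw [if_pos hsame]; exact hwserved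
      exact le_trans (hronle w havail) (le_trans (by omega) hcoef)
    · have htlt : (req R j).2 < (req R i).2 := lt_of_le_of_ne htji hsame
      set g := (req R i).2 - (req R j).2 with hg
      have hg1 : 1 ≤ g := by omega
      have hgρ : g ≤ triRho R E.tri.serve i := by omega
      have hwvi : natdist w (req R i).1 ≤ triRho R E.tri.serve i := by omega
      by_cases hbig : 2 ^ k < g
      · -- the origin is close enough
        have hvi := hV.2.2.1 _ (req_mem hi)
        have hr01 := hV.1
        have hr0n := hV.2.1
        have h0 : natdist r0 (req R i).1 ≤ n := natdist_le_iff.2 ⟨by omega, by omega⟩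
        have h2 : n ≤ Δ * triRho R E.tri.serve i := by
          calc n = Δ * 2 ^ k := E.hn
          _ ≤ Δ * triRho R E.tri.serve i := Nat.mul_le_mul_left Δ (by omega)
        have h3 : Δ * triRho R E.tri.serve i ≤ (4 * Δ + 1) * triRho R E.tri.serve i :=
          Nat.mul_le_mul_right _ (by omega)
        refine le_trans (hronle r0 (Finset.mem_union_left _ ?_)) (by omega)
        exact r0_mem_lineC r0 E.commitList E.sel _
      · push_neg at hbig
        set l := Nat.clog 2 g with hl
        have hg2l : g ≤ 2 ^ l := Nat.le_pow_clog one_lt_two g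
        have h2l2g : 2 ^ l ≤ 2 * g := two_pow_clog_le hg1
        have hlk : l ≤ k := le_trans (Nat.clog_mono_right 2 hbig)
          (le_of_eq (Nat.clog_pow 2 k one_lt_two))
        set D := Δ * 2 ^ l with hD
        have hDpos : 0 < D := by positivity
        set q := (w - 1) / D with hq
        have hw1 : 1 ≤ w := hrange.1
        have hwn : w ≤ n := hrange.2
        have hwl : Δ * q * 2 ^ l + 1 ≤ w := by
          have : Δ * q * 2 ^ l = q * D := by rw [hD]; ring
          rw [this, hq]
          have := Nat.div_mul_le_self (w - 1) D
          omega
        have hwr : w ≤ Δ * (q + 1) * 2 ^ l := by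
          have h1 : Δ * (q + 1) * 2 ^ l = (q + 1) * D := by rw [hD]; ring
          rw [h1]
          have hmod := Nat.div_add_mod (w - 1) D
          have hmlt : (w - 1) % D < D := Nat.mod_lt _ hDpos
          rw [← hq] at hmod
          have he : (q + 1) * D = D * q + D := by ring
          omega
        have hvalid : validIvl Δ k (l, q + 1) := by
          refine ⟨hlk, Nat.succ_le_succ (Nat.zero_le q), ?_⟩
          have hn' : 2 ^ (k - l) * D = n := by
            rw [hD, E.hn, ← mul_assoc]
            rw [show 2 ^ (k - l) * Δ * 2 ^ l = Δ * (2 ^ (k - l) * 2 ^ l) by ring,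
              ← pow_add]
            congr 2
            omega
          have h8 : (w - 1) / D < 2 ^ (k - l) :=
            (Nat.div_lt_iff_lt_mul hDpos).2 (by omega : w - 1 < 2 ^ (k - l) * D)
          rw [← hq] at h8
          show q + 1 ≤ 2 ^ (k - l)
          omega
        have hstay : stayActiveAt n Δ R E.tri.serve (l, q + 1) ((req R i).2 - 1) := by
          refine ⟨(w, (req R j).2), Finset.mem_biUnion.2
            ⟨j, Finset.mem_range.2 hjR, hbase⟩, ?_, by omega, by simp only; omega⟩
          simp only [ivlNodes, Finset.mem_Icc]
          constructor
          · simpa using hwl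
          · simpa using hwr
        have hlast : (req R i).2 - 1 ≤ lastT R := le_trans (by omega) (time_le_lastT hi)
        obtain ⟨v, hvN, hvC⟩ := E.loop_done _ hlast (l, q + 1) hvalid hstay
        have hti1 : (req R i).2 - 1 + 1 = (req R i).2 := by omega
        rw [hti1] at hvC
        have havail : v ∈ availNodes n r0 R E.tri.serve E.commitList E.sel E.qon i :=
          Finset.mem_union_left _ hvC
        have hvN' := Finset.mem_Icc.1 hvN
        simp only [min_le_iff] at hvN'
        have hnd : natdist v w ≤ 2 * D := by
          have e1 : Δ * (q + 1 + 1) * 2 ^ l = Δ * q * 2 ^ l + 2 * D := by rw [hD]; ring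
          have e2 : Δ * (q + 1) * 2 ^ l = Δ * q * 2 ^ l + D := by rw [hD]; ring
          have e3 : Δ * q * 2 ^ l ≤ Δ * (q + 1 - 2) * 2 ^ l + D := by
            rcases Nat.eq_zero_or_pos q with hq0 | hqpos
            · rw [hq0]; simp
            · refine le_of_eq ?_
              obtain ⟨q2, hq2⟩ : ∃ q2, q + 1 - 2 = q2 := ⟨_, rfl⟩
              rw [hq2]
              have hqe : q = q2 + 1 := by omega
              rw [hqe, hD]; ring
          have hv1 : Δ * (q + 1 - 2) * 2 ^ l + 1 ≤ v := by
            have := hvN'.1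
            simpa using this
          have hv2 : v ≤ Δ * (q + 1 + 1) * 2 ^ l := by
            have h := hvN'.2
            have : v ≤ min n (Δ * (q + 1 + 1) * 2 ^ l) := by
              simpa using h
            exact le_trans this (min_le_right _ _)
          rw [natdist_le_iff]
          constructor
          · omega
          · omega
        have hfin1 : 2 * D ≤ 4 * Δ * triRho R E.tri.serve i := by
          have : 2 ^ l ≤ 2 * triRho R E.tri.serve i := by omega
          calc 2 * D = 2 * (Δ * 2 ^ l) := by rw [hD]
          _ ≤ 2 * (Δ * (2 * triRho R E.tri.serve i)) := by
              exact Nat.mul_le_mul_left 2 (Nat.mul_le_mul_left Δ this)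
          _ = 4 * Δ * triRho R E.tri.serve i := by ring
        calc lineRon R E.qon i ≤ natdist v (req R i).1 := hronle v havail
        _ ≤ natdist v w + natdist w (req R i).1 := natdist_triangle _ _ _
        _ ≤ 4 * Δ * triRho R E.tri.serve i + triRho R E.tri.serve i := by omega
        _ = (4 * Δ + 1) * triRho R E.tri.serve i := by ring

end Lineon

lemma triBaseH_card_le (n : ℕ) (R : List (ℕ × ℕ)) (serve : ℕ → ℕ × ℕ) (i : ℕ) :
    (triBaseH n R serve i).card ≤ 2 * triRho R serve i := by
  refine le_trans (Finset.card_image_le) (le_trans (Finset.card_le_card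
    (show _ ⊆ Finset.Ico ((req R i).1 - triRho R serve i)
      ((req R i).1 + triRho R serve i) from ?_)) ?_)
  · intro v hv
    obtain ⟨_, hv2⟩ := Finset.mem_filter.1 hv
    rw [Finset.mem_Ico]
    have h1 := natdist_le_iff.1 hv2.2.1
    have h2 := natdist_le_iff.1 hv2.2.2
    omega
  · rw [Nat.card_Ico]
    omega

end Aux



/-- The total number of horizontal edges in lineon's solution
satisfies `|H^on| ≤ Σᵢ (ρ^on_i + 2ρ^T_i) ≤ (4Δ+3)·|OPT|`. -/
theorem lineon_delivery_cost (n Δ k r0 : ℕ) (R : List (ℕ × ℕ))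
    (hV : ValidInstance n r0 R) (hΔ : 1 ≤ Δ) (e : LineonExec n Δ k r0 R) :
    (lineHon n R e.tri.serve e.qon).card ≤
        (∑ i ∈ Finset.range R.length,
          (lineRon R e.qon i + 2 * triRho R e.tri.serve i)) ∧
      (∑ i ∈ Finset.range R.length,
          (lineRon R e.qon i + 2 * triRho R e.tri.serve i)) ≤
        (4 * Δ + 3) * optCost n r0 R := by
  constructor
  · refine le_trans Finset.card_biUnion_le (Finset.sum_le_sum ?_)
    intro i _
    refine le_trans (Finset.card_union_le _ _) ?_
    have h1 : ((Finset.Ico (min (e.qon i) (req R i).1)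
        (max (e.qon i) (req R i).1)).image
        (fun v => GEdge.h v (req R i).2)).card ≤ lineRon R e.qon i := by
      refine le_trans Finset.card_image_le ?_
      rw [Nat.card_Ico]
      exact le_of_eq rfl
    have h2 := triBaseH_card_le n R e.tri.serve i
    omega
  · calc ∑ i ∈ Finset.range R.length,
        (lineRon R e.qon i + 2 * triRho R e.tri.serve i)
        ≤ ∑ i ∈ Finset.range R.length, (4 * Δ + 3) * triRho R e.tri.serve i := by
          refine Finset.sum_le_sum ?_
          intro i hi
          have hron := ron_le e hV hΔ (Finset.mem_range.1 hi)
          have hexp : (4 * Δ + 3) * triRho R e.tri.serve i =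
              (4 * Δ + 1) * triRho R e.tri.serve i + 2 * triRho R e.tri.serve i := by
            ring
          omega
    _ = (4 * Δ + 3) * ∑ i ∈ Finset.range R.length, triRho R e.tri.serve i := by
          rw [Finset.mul_sum]
    _ ≤ (4 * Δ + 3) * optCost n r0 R :=
          Nat.mul_le_mul_left _ (sum_rho_le_opt e.tri hV)
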